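/- Let δ ∈ (0,1/2] and G_δ the regularized logarithm. Then for every real symmetric d×d matrix φ: (i) tr(φ − G_δ(φ)) ≥ (1/2)‖φ‖; (ii) tr(φ − G_δ(φ)) ≥ (1/(2δ))‖[φ]_−‖, where [φ]_− is the negative part of φ; and (iii) φ : (I − G_δ'(φ)) ≥ (1/2)‖φ‖ − d. -/
import Mathlib


open Matrix BigOperators

/-- Apply a scalar function spectrally: given an orthogonal `O` and eigenvalues `lam`,
the matrix `Oᵀ * diagonal (g ∘ lam) * O`. -/
noncomputable def spec {d : ℕ} (O : Matrix (Fin d) (Fin d) ℝ) (lam : Fin d → ℝ)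
    (g : ℝ → ℝ) : Matrix (Fin d) (Fin d) ℝ :=
  Oᵀ * Matrix.diagonal (fun i => g (lam i)) * O

/-- The matrix inner product `A : B = ∑ᵢⱼ Aᵢⱼ Bᵢⱼ`. -/
def minner {d : ℕ} (A B : Matrix (Fin d) (Fin d) ℝ) : ℝ :=
  ∑ i, ∑ j, A i j * B i j

/-- The squared Frobenius norm. -/
def frobSq {d : ℕ} (A : Matrix (Fin d) (Fin d) ℝ) : ℝ :=
  ∑ i, ∑ j, (A i j) ^ 2

/-- The regularized logarithm `G_δ`. -/
noncomputable def Gdelta (δ s : ℝ) : ℝ :=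
  if δ ≤ s then Real.log s else s / δ + Real.log δ - 1

/-- The derivative of the regularized logarithm: `G_δ'(s) = 1 / max s δ`. -/
noncomputable def Gdelta' (δ s : ℝ) : ℝ := (max s δ)⁻¹

/-- `β_δ(s) = max s δ`. -/
def betadelta (δ s : ℝ) : ℝ := max s δ

/-- `β_δ^b(s) = min (max s δ) b`. -/
def betadeltab (δ b s : ℝ) : ℝ := min (max s δ) b

/-- The conjugate regularization `H_δ`. -/
noncomputable def Hdelta (δ s : ℝ) : ℝ :=
  if s ≤ δ⁻¹ then Real.log s else δ * s + Real.log δ⁻¹ - 1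

variable {d : ℕ} (O : Matrix (Fin d) (Fin d) ℝ) (lam : Fin d → ℝ)

lemma spec_transpose (g : ℝ → ℝ) : (spec O lam g)ᵀ = spec O lam g := by
  simp [spec, Matrix.transpose_mul, Matrix.mul_assoc]

lemma trace_spec (hO : Oᵀ * O = 1) (g : ℝ → ℝ) :
    (spec O lam g).trace = ∑ i, g (lam i) := by
  have hO' : O * Oᵀ = 1 := mul_eq_one_comm.mp hO
  rw [spec, Matrix.trace_mul_cycle, hO', one_mul, Matrix.trace_diagonal]

lemma mul_spec (hO : Oᵀ * O = 1) (f g : ℝ → ℝ) :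
    spec O lam f * spec O lam g = spec O lam (fun s => f s * g s) := by
  have hO' : O * Oᵀ = 1 := mul_eq_one_comm.mp hO
  simp only [spec, Matrix.mul_assoc]
  rw [← Matrix.mul_assoc O Oᵀ, hO', one_mul, ← Matrix.mul_assoc (Matrix.diagonal _), Matrix.diagonal_mul_diagonal]

lemma minner_eq_trace (A B : Matrix (Fin d) (Fin d) ℝ) :
    minner A B = (Aᵀ * B).trace := by
  simp only [minner, Matrix.trace, Matrix.diag, Matrix.mul_apply, Matrix.transpose_apply]
  rw [Finset.sum_comm]

lemma minner_spec (hO : Oᵀ * O = 1) (f g : ℝ → ℝ) :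
    minner (spec O lam f) (spec O lam g) = ∑ i, f (lam i) * g (lam i) := by
  rw [minner_eq_trace, spec_transpose, mul_spec O lam hO, trace_spec O lam hO]

lemma frobSq_spec (hO : Oᵀ * O = 1) (f : ℝ → ℝ) :
    frobSq (spec O lam f) = ∑ i, (f (lam i))^2 := by
  have : frobSq (spec O lam f) = minner (spec O lam f) (spec O lam f) := by
    simp [frobSq, minner, sq]
  rw [this, minner_spec O lam hO]
  simp [sq]

lemma minner_one (A : Matrix (Fin d) (Fin d) ℝ) : minner A 1 = A.trace := by
  simp [minner, Matrix.one_apply, Matrix.trace, Matrix.diag]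

lemma minner_sub_right (A B C : Matrix (Fin d) (Fin d) ℝ) :
    minner A (B - C) = minner A B - minner A C := by
  simp [minner, Matrix.sub_apply, mul_sub, Finset.sum_sub_distrib]

lemma sqrt_le_sum_abs (f : Fin d → ℝ) :
    Real.sqrt (∑ i, (f i)^2) ≤ ∑ i, |f i| := by
  have h1 : ∑ i, (f i)^2 ≤ (∑ i, |f i|)^2 := by
    have := Finset.sum_sq_le_sq_sum_of_nonneg (s := Finset.univ)
      (f := fun i => |f i|) (fun i _ => abs_nonneg _)
    simpa [sq_abs] using this
  calc Real.sqrt (∑ i, (f i)^2) ≤ Real.sqrt ((∑ i, |f i|)^2) := Real.sqrt_le_sqrt h1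
    _ = ∑ i, |f i| := Real.sqrt_sq (Finset.sum_nonneg fun i _ => abs_nonneg _)


lemma log_le_half {s : ℝ} (hs : 0 < s) : Real.log s ≤ s / 2 := by
  have h1 : Real.log (Real.sqrt s) ≤ Real.sqrt s - 1 :=
    Real.log_le_sub_one_of_pos (Real.sqrt_pos.mpr hs)
  have h2 : Real.log (Real.sqrt s) = Real.log s / 2 := Real.log_sqrt hs.le
  have h3 : Real.sqrt s ^ 2 = s := Real.sq_sqrt hs.le
  nlinarith [sq_nonneg (Real.sqrt s - 2)]

lemma scalarA {δ : ℝ} (hδ1 : 0 < δ) (hδ2 : δ ≤ 1/2) (s : ℝ) :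
    |s| / 2 ≤ s - Gdelta δ s := by
  have hlog : Real.log δ ≤ 0 := Real.log_nonpos hδ1.le (by linarith)
  unfold Gdelta
  split_ifs with h
  · have hs : 0 < s := lt_of_lt_of_le hδ1 h
    rw [abs_of_pos hs]
    have := log_le_half hs; linarith
  · push_neg at h
    have hd : s / δ * δ = s := div_mul_cancel₀ s hδ1.ne'
    rcases le_or_gt 0 s with h0 | h0
    · rw [abs_of_nonneg h0]
      have hle : s / δ ≤ 1 := by rw [div_le_one hδ1]; linarith
      linarith
    · rw [abs_of_neg h0]
      have hle : s / δ ≤ 2 * s := by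
        rw [div_le_iff₀ hδ1]; nlinarith
      linarith

lemma scalarB {δ : ℝ} (hδ1 : 0 < δ) (hδ2 : δ ≤ 1/2) (s : ℝ) :
    |min s 0| / (2 * δ) ≤ s - Gdelta δ s := by
  have hlog : Real.log δ ≤ 0 := Real.log_nonpos hδ1.le (by linarith)
  unfold Gdelta
  split_ifs with h
  · have hs : 0 < s := lt_of_lt_of_le hδ1 h
    rw [min_eq_right hs.le, abs_zero]
    have := Real.log_le_sub_one_of_pos hs
    have : (0:ℝ)/(2*δ) = 0 := by simp
    rw [this]
    have := Real.log_le_sub_one_of_pos hs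
    linarith
  · push_neg at h
    have hd : s / δ * δ = s := div_mul_cancel₀ s hδ1.ne'
    rcases le_or_gt 0 s with h0 | h0
    · rw [min_eq_right h0, abs_zero]
      have hle : s / δ ≤ 1 := by rw [div_le_one hδ1]; linarith
      have : (0:ℝ)/(2*δ) = 0 := by simp
      rw [this]
      linarith
    · rw [min_eq_left h0.le, abs_of_neg h0, div_le_iff₀ (by linarith : (0:ℝ) < 2*δ)]
      nlinarith [mul_nonneg (neg_nonneg.mpr h0.le) (by linarith : (0:ℝ) ≤ 1 - 2*δ),
        mul_nonneg hδ1.le (neg_nonneg.mpr hlog)]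

lemma scalarC {δ : ℝ} (hδ1 : 0 < δ) (hδ2 : δ ≤ 1/2) (s : ℝ) :
    |s| / 2 - 1 ≤ s * (1 - Gdelta' δ s) := by
  unfold Gdelta'
  have h2 : (2:ℝ) ≤ δ⁻¹ := by
    have := mul_inv_cancel₀ hδ1.ne'
    nlinarith [inv_pos.mpr hδ1]
  rcases le_or_gt δ s with h | h
  · rw [max_eq_left h]
    have hs : 0 < s := lt_of_lt_of_le hδ1 h
    rw [abs_of_pos hs, mul_sub, mul_one, mul_inv_cancel₀ hs.ne']
    linarith
  · rw [max_eq_right h.le]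
    rcases le_or_gt 0 s with h0 | h0
    · rw [abs_of_nonneg h0]
      have hle : s * δ⁻¹ ≤ 1 := by
        rw [← div_eq_mul_inv, div_le_one hδ1]; exact h.le
      nlinarith
    · rw [abs_of_neg h0]
      nlinarith

theorem statement8 (δ : ℝ) (hδ : δ ∈ Set.Ioc (0:ℝ) (1/2)) (d : ℕ)
    (O : Matrix (Fin d) (Fin d) ℝ) (lam : Fin d → ℝ) (hO : Oᵀ * O = 1) :
    (1/2) * Real.sqrt (frobSq (spec O lam id)) ≤
      Matrix.trace (spec O lam id - spec O lam (Gdelta δ)) ∧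
    (1/(2*δ)) * Real.sqrt (frobSq (spec O lam (fun s => min s 0))) ≤
      Matrix.trace (spec O lam id - spec O lam (Gdelta δ)) ∧
    (1/2) * Real.sqrt (frobSq (spec O lam id)) - d ≤
      minner (spec O lam id) (1 - spec O lam (Gdelta' δ)) := by
  obtain ⟨hδ1, hδ2⟩ := hδ
  have htr : Matrix.trace (spec O lam id - spec O lam (Gdelta δ))
      = ∑ i, (lam i - Gdelta δ (lam i)) := by
    rw [Matrix.trace_sub, trace_spec O lam hO, trace_spec O lam hO,
      ← Finset.sum_sub_distrib]
    rfl
  have hsq1 : Real.sqrt (frobSq (spec O lam id)) ≤ ∑ i, |lam i| := by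
    rw [frobSq_spec O lam hO]
    exact sqrt_le_sum_abs _
  have hsq2 : Real.sqrt (frobSq (spec O lam (fun s => min s 0)))
      ≤ ∑ i, |min (lam i) 0| := by
    rw [frobSq_spec O lam hO]
    exact sqrt_le_sum_abs _
  have hδpos : (0:ℝ) < 2 * δ := by linarith
  refine ⟨?_, ?_, ?_⟩
  · rw [htr]
    calc (1/2) * Real.sqrt (frobSq (spec O lam id))
        ≤ (1/2) * ∑ i, |lam i| := by linarith
      _ = ∑ i, |lam i| / 2 := by rw [Finset.mul_sum]; congr 1; ext i; ring
      _ ≤ ∑ i, (lam i - Gdelta δ (lam i)) :=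
          Finset.sum_le_sum fun i _ => scalarA hδ1 hδ2 (lam i)
  · rw [htr]
    calc (1/(2*δ)) * Real.sqrt (frobSq (spec O lam (fun s => min s 0)))
        ≤ (1/(2*δ)) * ∑ i, |min (lam i) 0| := by
          have h0 : (0:ℝ) < 1/(2*δ) := by positivity
          nlinarith [Real.sqrt_nonneg (frobSq (spec O lam (fun s => min s 0)))]
      _ = ∑ i, |min (lam i) 0| / (2*δ) := by
          rw [Finset.mul_sum]; congr 1; ext i; ring
      _ ≤ ∑ i, (lam i - Gdelta δ (lam i)) :=
          Finset.sum_le_sum fun i _ => scalarB hδ1 hδ2 (lam i)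
  · have hone : (1 : Matrix (Fin d) (Fin d) ℝ) = spec O lam (fun _ => 1) := by
      rw [spec]
      simp only [Matrix.diagonal_one, Matrix.mul_one]
      exact hO.symm
    have hmin : minner (spec O lam id) (1 - spec O lam (Gdelta' δ))
        = ∑ i, lam i * (1 - Gdelta' δ (lam i)) := by
      rw [minner_sub_right, hone, minner_spec O lam hO, minner_spec O lam hO,
        ← Finset.sum_sub_distrib]
      congr 1; ext i; simp [mul_sub]
    rw [hmin]
    calc (1/2) * Real.sqrt (frobSq (spec O lam id)) - d
        ≤ (1/2) * (∑ i, |lam i|) - d := by linarith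
      _ = ∑ i, (|lam i| / 2 - 1) := by
          rw [Finset.sum_sub_distrib, Finset.mul_sum]
          simp [Finset.card_univ]
          congr 1; ext i; ring
      _ ≤ ∑ i, lam i * (1 - Gdelta' δ (lam i)) :=
          Finset.sum_le_sum fun i _ => scalarC hδ1 hδ2 (lam i)
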